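/- Let X be a real Hilbert space and let T : X → X be a nonexpansive map with Fix T ≠ ∅. Let (λ_n) be a sequence in [0,1] with ∑_{n∈ℕ} (1−λ_n)λ_n = +∞, let x_0 ∈ X, and define x_{n+1} := (1−λ_n)x_n + λ_n T x_n for all n. Then (x_n) converges weakly to a point of Fix T, and (x_n) is Fejér monotone with respect to Fix T, i.e., ‖x_{n+1} − f‖ ≤ ‖x_n − f‖ for every f ∈ Fix T and every n. -/

import Mathlib

/-!
Let `f` be a fixed point. Nonexpansiveness and the parallelogram identity give
`‖xₙ₊₁ - f‖² ≤ ‖xₙ - f‖² - (1 - λₙ)λₙ‖xₙ - T xₙ‖²`, so `(xₙ)` is Fejér monotone and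
`∑ (1 - λₙ)λₙ‖xₙ - T xₙ‖² < ∞`. The residual `‖xₙ - T xₙ‖` is nonincreasing, so the divergence of
`∑ (1 - λₙ)λₙ` forces it to tend to `0`. By the demiclosedness principle every weak cluster point
of `(xₙ)` is then a fixed point. Finally (Opial), `‖xₙ - p‖` converges for every fixed point `p`,
and polarizing `⟪xₙ, p - q⟫` shows that two weak cluster points `p`, `q` coincide; a bounded
sequence with a single weak cluster point converges weakly.
-/

open Filter Topology
open scoped RealInnerProductSpace

/-- Sequential Banach–Alaoglu, applied on the closed span of the sequence, which is separable. -/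
theorem exists_weak_tendsto_subseq_of_bounded {X : Type*} [NormedAddCommGroup X]
    [InnerProductSpace ℝ X] [CompleteSpace X] {x : ℕ → X} {C : ℝ} (hC : ∀ n, ‖x n‖ ≤ C) :
    ∃ z : X, ∃ φ : ℕ → ℕ, StrictMono φ ∧
      ∀ y, Tendsto (fun j => ⟪x (φ j), y⟫) atTop (𝓝 ⟪z, y⟫) := by
  let M := (Submodule.span ℝ (Set.range x)).topologicalClosure
  have hxM n : x n ∈ M :=
    Submodule.le_topologicalClosure _ (Submodule.subset_span (Set.mem_range_self n))
  have : CompleteSpace M := (Submodule.isClosed_topologicalClosure _).completeSpace_coe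
  have : TopologicalSpace.SeparableSpace M := by
    refine TopologicalSpace.IsSeparable.separableSpace ?_
    simpa [M, Submodule.topologicalClosure_coe] using
      ((Set.countable_range x).isSeparable.span (R := ℝ)).closure
  let f : ℕ → WeakDual ℝ M := fun n =>
    WeakDual.toStrongDual.symm (InnerProductSpace.toDual ℝ M ⟨x n, hxM n⟩)
  obtain ⟨g, -, φ, hφ, hg⟩ := WeakDual.isSeqCompact_closedBall ℝ M 0 C
    (x := f) fun n => by simpa [f] using hC n
  let z : M := (InnerProductSpace.toDual ℝ M).symm (WeakDual.toStrongDual g)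
  refine ⟨z, φ, hφ, fun y => ?_⟩
  -- both `x n` and `z` lie in `M`, so they only see the projection of `y` onto `M`
  have hz : ⟪(z : X), y⟫ = g (M.orthogonalProjectionOnto y) := by
    rw [← M.inner_orthogonalProjectionOnto_eq_of_mem_left]
    exact InnerProductSpace.toDual_symm_apply
  simpa [f, hz, Function.comp_def] using
    ((WeakDual.eval_continuous (M.orthogonalProjectionOnto y)).tendsto g).comp hg

/-- The demiclosedness principle for nonexpansive maps. -/
theorem apply_eq_self_of_weak_tendsto {X : Type*} [NormedAddCommGroup X] [InnerProductSpace ℝ X]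
    {T : X → X} (hT : ∀ x y, ‖T x - T y‖ ≤ ‖x - y‖) {u : ℕ → X} {z : X} {C : ℝ}
    (hC : ∀ n, ‖u n‖ ≤ C) (hres : Tendsto (fun n => ‖u n - T (u n)‖) atTop (𝓝 0))
    (hw : ∀ y, Tendsto (fun n => ⟪u n, y⟫) atTop (𝓝 ⟪z, y⟫)) : T z = z := by
  set d := z - T z
  have hbound n : ‖d‖ ^ 2 ≤
      ‖u n - T (u n)‖ ^ 2 + 2 * (‖u n - T (u n)‖ * ‖u n - z‖) - 2 * ⟪u n - z, d⟫ := by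
    have htri : ‖u n - T z‖ ≤ ‖u n - T (u n)‖ + ‖u n - z‖ :=
      (norm_sub_le_norm_sub_add_norm_sub _ (T (u n)) _).trans (by gcongr; exact hT _ _)
    have hexp : ‖u n - T z‖ ^ 2 = ‖u n - z‖ ^ 2 + 2 * ⟪u n - z, d⟫ + ‖d‖ ^ 2 := by
      rw [← sub_add_sub_cancel (u n) z (T z), norm_add_sq_real]
    nlinarith [norm_nonneg (u n - T z)]
  have hcross : Tendsto (fun n => ‖u n - T (u n)‖ * ‖u n - z‖) atTop (𝓝 0) :=
    hres.zero_mul_isBoundedUnder_le <| isBoundedUnder_of ⟨C + ‖z‖, fun n => by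
      simpa using (norm_sub_le (u n) z).trans (by gcongr; exact hC n)⟩
  have hinner : Tendsto (fun n => ⟪u n - z, d⟫) atTop (𝓝 0) := by
    simpa [inner_sub_left] using (hw d).sub_const ⟪z, d⟫
  have hd : ‖d‖ ^ 2 ≤ 0 := ge_of_tendsto (by simpa using
    ((hres.pow 2).add (hcross.const_mul 2)).sub (hinner.const_mul 2)) (.of_forall hbound)
  exact (sub_eq_zero.mp (norm_eq_zero.mp (by nlinarith [norm_nonneg d]))).symm

theorem eq_of_weak_tendsto_of_tendsto_norm_sub {X : Type*} [NormedAddCommGroup X]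
    [InnerProductSpace ℝ X] {x : ℕ → X} {p q : X} {a b : ℝ}
    (hp : Tendsto (fun n => ‖x n - p‖) atTop (𝓝 a)) (hq : Tendsto (fun n => ‖x n - q‖) atTop (𝓝 b))
    {φ ψ : ℕ → ℕ} (hφ : Tendsto φ atTop atTop) (hψ : Tendsto ψ atTop atTop)
    (hwp : ∀ y, Tendsto (fun n => ⟪x (φ n), y⟫) atTop (𝓝 ⟪p, y⟫))
    (hwq : ∀ y, Tendsto (fun n => ⟪x (ψ n), y⟫) atTop (𝓝 ⟪q, y⟫)) : p = q := by
  -- polarization: `⟪x n, p - q⟫` is determined by `‖x n - p‖` and `‖x n - q‖`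
  have hpol n : ⟪x n, p - q⟫ = (‖x n - q‖ ^ 2 - ‖x n - p‖ ^ 2 + ‖p‖ ^ 2 - ‖q‖ ^ 2) / 2 := by
    rw [norm_sub_sq_real, norm_sub_sq_real, inner_sub_right]
    ring
  set ℓ := (b ^ 2 - a ^ 2 + ‖p‖ ^ 2 - ‖q‖ ^ 2) / 2
  have hℓ : Tendsto (fun n => ⟪x n, p - q⟫) atTop (𝓝 ℓ) := by
    simpa only [hpol] using
      ((((hq.pow 2).sub (hp.pow 2)).add_const _).sub_const _).div_const 2
  have hpℓ : ⟪p, p - q⟫ = ℓ := tendsto_nhds_unique (hwp _) (hℓ.comp hφ)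
  have hqℓ : ⟪q, p - q⟫ = ℓ := tendsto_nhds_unique (hwq _) (hℓ.comp hψ)
  have : ⟪p - q, p - q⟫ = 0 := by rw [inner_sub_left, hpℓ, hqℓ, sub_self]
  exact sub_eq_zero.mp (inner_self_eq_zero.mp this)

theorem summable_of_le_sub_succ {t s : ℕ → ℝ} (ht : ∀ n, 0 ≤ t n) (hs : ∀ n, 0 ≤ s n)
    (h : ∀ n, t n ≤ s n - s (n + 1)) : Summable t :=
  summable_of_sum_range_le ht fun n => calc
    ∑ k ∈ Finset.range n, t k ≤ ∑ k ∈ Finset.range n, (s k - s (k + 1)) :=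
      Finset.sum_le_sum fun k _ => h k
    _ = s 0 - s n := Finset.sum_range_sub' s n
    _ ≤ s 0 := sub_le_self _ (hs n)

theorem tendsto_zero_of_antitone_of_summable_mul {a r : ℕ → ℝ} (hr : Antitone r)
    (hr0 : ∀ n, 0 ≤ r n) (ha : ∀ n, 0 ≤ a n) (hdiv : ¬ Summable a)
    (hsum : Summable fun n => a n * r n) : Tendsto r atTop (𝓝 0) := by
  have hbdd : BddBelow (Set.range r) := ⟨0, Set.forall_mem_range.mpr hr0⟩
  have hlim := tendsto_atTop_ciInf hr hbdd
  obtain hL | hL := (le_ciInf hr0).eq_or_lt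
  · rwa [← hL] at hlim
  refine absurd (Summable.of_nonneg_of_le ha (fun n => ?_) (hsum.div_const (⨅ n, r n))) hdiv
  rw [le_div_iff₀ hL]
  exact mul_le_mul_of_nonneg_left (ciInf_le hbdd n) (ha n)

section Fejer

variable {X : Type*} [NormedAddCommGroup X]

def FejerMonotone (x : ℕ → X) (F : Set X) : Prop :=
  ∀ f ∈ F, ∀ n, ‖x (n + 1) - f‖ ≤ ‖x n - f‖

variable {x : ℕ → X} {F : Set X} {f : X}

theorem FejerMonotone.antitone_norm_sub (hx : FejerMonotone x F) (hf : f ∈ F) :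
    Antitone fun n => ‖x n - f‖ :=
  antitone_nat_of_succ_le (hx f hf)

theorem FejerMonotone.tendsto_norm_sub (hx : FejerMonotone x F) (hf : f ∈ F) :
    Tendsto (fun n => ‖x n - f‖) atTop (𝓝 (⨅ n, ‖x n - f‖)) :=
  tendsto_atTop_ciInf (hx.antitone_norm_sub hf)
    ⟨0, Set.forall_mem_range.mpr fun _ => norm_nonneg _⟩

theorem FejerMonotone.norm_le (hx : FejerMonotone x F) (hf : f ∈ F) (n : ℕ) :
    ‖x n‖ ≤ ‖x 0 - f‖ + ‖f‖ :=
  calc ‖x n‖ ≤ ‖x n - f‖ + ‖f‖ := norm_le_norm_sub_add _ _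
    _ ≤ ‖x 0 - f‖ + ‖f‖ := by gcongr; exact hx.antitone_norm_sub hf (Nat.zero_le n)

/-- Opial's lemma. -/
theorem FejerMonotone.exists_weak_tendsto [InnerProductSpace ℝ X] [CompleteSpace X]
    (hx : FejerMonotone x F) (hF : F.Nonempty)
    (hcluster : ∀ z (φ : ℕ → ℕ), Tendsto φ atTop atTop →
      (∀ y, Tendsto (fun n => ⟪x (φ n), y⟫) atTop (𝓝 ⟪z, y⟫)) → z ∈ F) :
    ∃ p ∈ F, ∀ y, Tendsto (fun n => ⟪x n, y⟫) atTop (𝓝 ⟪p, y⟫) := by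
  obtain ⟨f, hf⟩ := hF
  have hbdd := hx.norm_le hf
  obtain ⟨p, φ, hφ, hwp⟩ := exists_weak_tendsto_subseq_of_bounded hbdd
  have hpF := hcluster p φ hφ.tendsto_atTop hwp
  refine ⟨p, hpF, fun y => tendsto_of_subseq_tendsto fun ns hns => ?_⟩
  obtain ⟨q, ψ, hψ, hwq⟩ := exists_weak_tendsto_subseq_of_bounded fun n => hbdd (ns n)
  have hnsψ : Tendsto (ns ∘ ψ) atTop atTop := hns.comp hψ.tendsto_atTop
  have hqF := hcluster q (ns ∘ ψ) hnsψ hwq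
  obtain rfl : p = q := eq_of_weak_tendsto_of_tendsto_norm_sub (hx.tendsto_norm_sub hpF)
    (hx.tendsto_norm_sub hqF) hφ.tendsto_atTop hnsψ hwp hwq
  exact ⟨ψ, hwq y⟩

end Fejer

theorem norm_one_sub_smul_add_smul_sq {X : Type*} [NormedAddCommGroup X] [InnerProductSpace ℝ X]
    (a b : X) (t : ℝ) :
    ‖(1 - t) • a + t • b‖ ^ 2 = (1 - t) * ‖a‖ ^ 2 + t * ‖b‖ ^ 2 - t * (1 - t) * ‖a - b‖ ^ 2 := by
  simp only [← real_inner_self_eq_norm_sq, inner_add_left, inner_add_right, inner_sub_left,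
    inner_sub_right, real_inner_smul_left, real_inner_smul_right, real_inner_comm a b]
  ring

namespace KrasnoselskiiMann

variable {X : Type*} [NormedAddCommGroup X] [InnerProductSpace ℝ X] {T : X → X} {lam : ℕ → ℝ}
  {x : ℕ → X}

theorem norm_sub_sq_le (hT : ∀ x y, ‖T x - T y‖ ≤ ‖x - y‖) (hlam : ∀ n, lam n ∈ Set.Icc (0 : ℝ) 1)
    (hx : ∀ n, x (n + 1) = (1 - lam n) • x n + lam n • T (x n)) {f : X}
    (hf : f ∈ Function.fixedPoints T) (n : ℕ) :
    ‖x (n + 1) - f‖ ^ 2 ≤ ‖x n - f‖ ^ 2 - (1 - lam n) * lam n * ‖x n - T (x n)‖ ^ 2 := by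
  have hcomb : x (n + 1) - f = (1 - lam n) • (x n - f) + lam n • (T (x n) - f) := by
    rw [hx n]; module
  have hTf : ‖T (x n) - f‖ ≤ ‖x n - f‖ := by simpa [hf.eq] using hT (x n) f
  obtain ⟨hl0, hl1⟩ := hlam n
  rw [hcomb, norm_one_sub_smul_add_smul_sq, sub_sub_sub_cancel_right]
  nlinarith [pow_le_pow_left₀ (norm_nonneg _) hTf 2]

theorem fejerMonotone (hT : ∀ x y, ‖T x - T y‖ ≤ ‖x - y‖) (hlam : ∀ n, lam n ∈ Set.Icc (0 : ℝ) 1)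
    (hx : ∀ n, x (n + 1) = (1 - lam n) • x n + lam n • T (x n)) :
    FejerMonotone x (Function.fixedPoints T) := fun f hf n => by
  obtain ⟨hl0, hl1⟩ := hlam n
  refine pow_le_pow_iff_left₀ (norm_nonneg _) (norm_nonneg _) two_ne_zero |>.mp ?_
  nlinarith [norm_sub_sq_le hT hlam hx hf n, mul_nonneg (sub_nonneg.mpr hl1) hl0,
    sq_nonneg ‖x n - T (x n)‖]

theorem norm_sub_apply_succ_le (hT : ∀ x y, ‖T x - T y‖ ≤ ‖x - y‖)
    (hlam : ∀ n, lam n ∈ Set.Icc (0 : ℝ) 1)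
    (hx : ∀ n, x (n + 1) = (1 - lam n) • x n + lam n • T (x n)) (n : ℕ) :
    ‖x (n + 1) - T (x (n + 1))‖ ≤ ‖x n - T (x n)‖ := by
  obtain ⟨hl0, hl1⟩ := hlam n
  have h₁ : x (n + 1) - T (x n) = (1 - lam n) • (x n - T (x n)) := by rw [hx n]; module
  have h₂ : x n - x (n + 1) = lam n • (x n - T (x n)) := by rw [hx n]; module
  calc ‖x (n + 1) - T (x (n + 1))‖
      ≤ ‖x (n + 1) - T (x n)‖ + ‖T (x n) - T (x (n + 1))‖ :=
        norm_sub_le_norm_sub_add_norm_sub _ _ _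
    _ ≤ ‖x (n + 1) - T (x n)‖ + ‖x n - x (n + 1)‖ := by gcongr; exact hT _ _
    _ = ‖x n - T (x n)‖ := by
        rw [h₁, h₂, norm_smul, norm_smul, Real.norm_of_nonneg hl0,
          Real.norm_of_nonneg (sub_nonneg.mpr hl1)]
        ring

theorem tendsto_norm_sub_apply (hT : ∀ x y, ‖T x - T y‖ ≤ ‖x - y‖)
    (hF : (Function.fixedPoints T).Nonempty) (hlam : ∀ n, lam n ∈ Set.Icc (0 : ℝ) 1)
    (hdiv : ¬ Summable (fun n => (1 - lam n) * lam n))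
    (hx : ∀ n, x (n + 1) = (1 - lam n) • x n + lam n • T (x n)) :
    Tendsto (fun n => ‖x n - T (x n)‖) atTop (𝓝 0) := by
  obtain ⟨f, hf⟩ := hF
  have hcoef n : 0 ≤ (1 - lam n) * lam n := mul_nonneg (sub_nonneg.mpr (hlam n).2) (hlam n).1
  have hsum : Summable fun n => (1 - lam n) * lam n * ‖x n - T (x n)‖ ^ 2 :=
    summable_of_le_sub_succ (s := fun n => ‖x n - f‖ ^ 2)
      (fun n => mul_nonneg (hcoef n) (sq_nonneg _)) (fun n => sq_nonneg _)
      fun n => by linarith [norm_sub_sq_le hT hlam hx hf n]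
  have hanti : Antitone fun n => ‖x n - T (x n)‖ ^ 2 := antitone_nat_of_succ_le fun n => by
    gcongr; exact norm_sub_apply_succ_le hT hlam hx n
  have hsq :=
    tendsto_zero_of_antitone_of_summable_mul hanti (fun n => sq_nonneg _) hcoef hdiv hsum
  simpa using hsq.sqrt

end KrasnoselskiiMann

/-- **Reich's theorem.** If `T` is a nonexpansive self-map of a real Hilbert space with a
fixed point, `(λₙ)` lies in `[0,1]` with `∑ (1-λₙ)λₙ = +∞`, and
`xₙ₊₁ = (1-λₙ)xₙ + λₙ T xₙ`, then `(xₙ)` converges weakly to a fixed point of `T`,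
and `(xₙ)` is Fejér monotone with respect to `Fix T`. -/
theorem km_weak_convergence_and_fejer
    {X : Type*} [NormedAddCommGroup X] [InnerProductSpace ℝ X] [CompleteSpace X]
    (T : X → X) (hT : ∀ x y : X, ‖T x - T y‖ ≤ ‖x - y‖)
    (hF : (Function.fixedPoints T).Nonempty)
    (lam : ℕ → ℝ) (hlam : ∀ n, lam n ∈ Set.Icc (0 : ℝ) 1)
    (hdiv : ¬ Summable (fun n => (1 - lam n) * lam n))
    (x : ℕ → X) (hx : ∀ n, x (n + 1) = (1 - lam n) • x n + lam n • T (x n)) :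
    (∃ p ∈ Function.fixedPoints T,
        ∀ y : X, Tendsto (fun n => ⟪x n, y⟫) atTop (𝓝 ⟪p, y⟫)) ∧
      (∀ f ∈ Function.fixedPoints T, ∀ n : ℕ, ‖x (n + 1) - f‖ ≤ ‖x n - f‖) := by
  have hfejer := KrasnoselskiiMann.fejerMonotone hT hlam hx
  have hres := KrasnoselskiiMann.tendsto_norm_sub_apply hT hF hlam hdiv hx
  obtain ⟨f, hf⟩ := hF
  refine ⟨hfejer.exists_weak_tendsto ⟨f, hf⟩ fun z φ hφ hw => ?_, hfejer⟩
  exact apply_eq_self_of_weak_tendsto hT (u := x ∘ φ) (fun n => hfejer.norm_le hf (φ n))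
    (hres.comp hφ) hw
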